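/- arXiv:1711.00070 — 2 statements merged into one kernel-verified Lean document; each statement's English description precedes it below -/
import Mathlib

section
/- If P is a stochastically transitive distribution on S_n, then the minimum of L_P(σ) = E_{Σ∼P}[d_τ(Σ,σ)] over σ ∈ S_n equals Σ_{i<j} min{p_{i,j}, 1 - p_{i,j}} = Σ_{i<j} (1/2 - |p_{i,j} - 1/2|). -/
open Finset

/-- The set of ordered pairs (i,j) with i < j. -/
def pairs (n : ℕ) : Finset (Fin n × Fin n) :=
  Finset.univ.filter fun p => p.1 < p.2

/-- Kendall tau distance between two permutations. -/
noncomputable def dtau {n : ℕ} (σ σ' : Equiv.Perm (Fin n)) : ℝ :=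
  ∑ p ∈ pairs n,
    if (((σ p.1 : ℕ) : ℤ) - ((σ p.2 : ℕ) : ℤ)) * (((σ' p.1 : ℕ) : ℤ) - ((σ' p.2 : ℕ) : ℤ)) < 0
    then 1 else 0

/-- Expected Kendall tau distance L_P(σ) = E_{Σ∼P}[d_τ(Σ,σ)]. -/
noncomputable def L {n : ℕ} (P : Equiv.Perm (Fin n) → ℝ) (σ : Equiv.Perm (Fin n)) : ℝ :=
  ∑ τ : Equiv.Perm (Fin n), P τ * dtau τ σ

/-- Pairwise probability p_{i,j} = P{Σ(i) < Σ(j)}. -/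
noncomputable def pp {n : ℕ} (P : Equiv.Perm (Fin n) → ℝ) (i j : Fin n) : ℝ :=
  ∑ τ : Equiv.Perm (Fin n), P τ * (if τ i < τ j then 1 else 0)

/-- P is a probability distribution on S_n. -/
def IsProb {n : ℕ} (P : Equiv.Perm (Fin n) → ℝ) : Prop :=
  (∀ τ, 0 ≤ P τ) ∧ ∑ τ : Equiv.Perm (Fin n), P τ = 1

/-- σ is a Kemeny median of P. -/
def IsMedian {n : ℕ} (P : Equiv.Perm (Fin n) → ℝ) (σ : Equiv.Perm (Fin n)) : Prop :=
  ∀ τ, L P σ ≤ L P τ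

/-- L*_P = min_σ L_P(σ). -/
noncomputable def Lstar {n : ℕ} (P : Equiv.Perm (Fin n) → ℝ) : ℝ :=
  ⨅ σ : Equiv.Perm (Fin n), L P σ

/-- Stochastic transitivity. -/
def StochTrans {n : ℕ} (P : Equiv.Perm (Fin n) → ℝ) : Prop :=
  ∀ i j k : Fin n, 1/2 ≤ pp P i j → 1/2 ≤ pp P j k → 1/2 ≤ pp P i k

/-- Strict stochastic transitivity. -/
def StrictStochTrans {n : ℕ} (P : Equiv.Perm (Fin n) → ℝ) : Prop :=
  StochTrans P ∧ ∀ i j : Fin n, i < j → pp P i j ≠ 1/2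

/- ==================== auxiliary lemmas ==================== -/

lemma pp_self' {n : ℕ} (P : Equiv.Perm (Fin n) → ℝ) (i : Fin n) : pp P i i = 0 := by
  simp [pp]

lemma pp_add' {n : ℕ} {P : Equiv.Perm (Fin n) → ℝ} (hP : IsProb P) {i j : Fin n} (h : i ≠ j) :
    pp P i j + pp P j i = 1 := by
  rw [← hP.2]
  unfold pp
  rw [← Finset.sum_add_distrib]
  refine Finset.sum_congr rfl fun τ _ => ?_
  have hne : τ i ≠ τ j := fun hh => h (τ.injective hh)
  rcases hne.lt_or_gt with h1 | h1
  · rw [if_pos h1, if_neg (not_lt.2 h1.le)]; ring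
  · rw [if_neg (not_lt.2 h1.le), if_pos h1]; ring

lemma ind_iff' (a b c d : ℕ) (h : c < d) :
    ((a:ℤ) - b) * ((c:ℤ) - d) < 0 ↔ b < a := by
  rw [mul_neg_iff]; omega

lemma ind_iff'' (a b c d : ℕ) (h : d < c) :
    ((a:ℤ) - b) * ((c:ℤ) - d) < 0 ↔ a < b := by
  rw [mul_neg_iff]; omega

lemma L_eq' {n : ℕ} {P : Equiv.Perm (Fin n) → ℝ} (hP : IsProb P) (σ : Equiv.Perm (Fin n)) :
    L P σ = ∑ p ∈ pairs n,
      (if σ p.1 < σ p.2 then 1 - pp P p.1 p.2 else pp P p.1 p.2) := by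
  unfold L dtau
  simp_rw [Finset.mul_sum]
  rw [Finset.sum_comm]
  refine Finset.sum_congr rfl fun p hp => ?_
  obtain ⟨i, j⟩ := p
  have hij : i < j := by simpa [pairs] using hp
  by_cases hs : σ i < σ j
  · rw [if_pos hs]
    have step : ∀ τ : Equiv.Perm (Fin n),
        (P τ * if (((τ i : ℕ) : ℤ) - ((τ j : ℕ) : ℤ)) *
            (((σ i : ℕ) : ℤ) - ((σ j : ℕ) : ℤ)) < 0 then (1:ℝ) else 0)
          = P τ * (if τ j < τ i then 1 else 0) := by
      intro τ
      congr 1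
      refine if_congr ?_ rfl rfl
      rw [Fin.lt_def]
      exact ind_iff' (τ i) (τ j) (σ i) (σ j) hs
    calc (∑ τ : Equiv.Perm (Fin n), P τ *
            if (((τ i : ℕ) : ℤ) - ((τ j : ℕ) : ℤ)) *
              (((σ i : ℕ) : ℤ) - ((σ j : ℕ) : ℤ)) < 0 then (1:ℝ) else 0)
        = ∑ τ : Equiv.Perm (Fin n), P τ * (if τ j < τ i then 1 else 0) :=
          Finset.sum_congr rfl fun τ _ => step τ
      _ = pp P j i := rfl
      _ = 1 - pp P i j := by have := pp_add' hP hij.ne; linarith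
  · have hs' : σ j < σ i := by
      have hne : σ i ≠ σ j := fun hh => hij.ne (σ.injective hh)
      rcases hne.lt_or_gt with h | h
      · exact absurd h hs
      · exact h
    rw [if_neg hs]
    have step : ∀ τ : Equiv.Perm (Fin n),
        (P τ * if (((τ i : ℕ) : ℤ) - ((τ j : ℕ) : ℤ)) *
            (((σ i : ℕ) : ℤ) - ((σ j : ℕ) : ℤ)) < 0 then (1:ℝ) else 0)
          = P τ * (if τ i < τ j then 1 else 0) := by
      intro τ
      congr 1
      refine if_congr ?_ rfl rfl
      rw [Fin.lt_def]
      exact ind_iff'' (τ i) (τ j) (σ i) (σ j) hs'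
    exact Finset.sum_congr rfl fun τ _ => step τ

/-- strict order induced by the pairwise probabilities, with ties broken by index -/
def rel {n : ℕ} (P : Equiv.Perm (Fin n) → ℝ) (i j : Fin n) : Prop :=
  1/2 < pp P i j ∨ (pp P i j = 1/2 ∧ i < j)

lemma rel_irrefl' {n : ℕ} (P : Equiv.Perm (Fin n) → ℝ) (i : Fin n) : ¬ rel P i i := by
  rw [rel, pp_self']
  rintro (h | ⟨h, h'⟩)
  · norm_num at h
  · exact lt_irrefl _ h'

lemma rel_total' {n : ℕ} {P : Equiv.Perm (Fin n) → ℝ} (hP : IsProb P) {i j : Fin n}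
    (h : i ≠ j) : rel P i j ∨ rel P j i := by
  have hsum := pp_add' hP h
  by_cases h1 : 1/2 < pp P i j
  · exact Or.inl (Or.inl h1)
  by_cases h2 : 1/2 < pp P j i
  · exact Or.inr (Or.inl h2)
  have e1 : pp P i j = 1/2 := by push_neg at h1 h2; linarith
  have e2 : pp P j i = 1/2 := by push_neg at h1 h2; linarith
  rcases h.lt_or_gt with hlt | hlt
  · exact Or.inl (Or.inr ⟨e1, hlt⟩)
  · exact Or.inr (Or.inr ⟨e2, hlt⟩)

lemma rel_asymm' {n : ℕ} {P : Equiv.Perm (Fin n) → ℝ} (hP : IsProb P) {i j : Fin n}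
    (h1 : rel P i j) (h2 : rel P j i) : False := by
  have hij : i ≠ j := by rintro rfl; exact rel_irrefl' P i h1
  have hsum := pp_add' hP hij
  rcases h1 with h1 | ⟨h1, h1'⟩ <;> rcases h2 with h2 | ⟨h2, h2'⟩
  · linarith
  · linarith
  · linarith
  · exact lt_asymm h1' h2'

lemma rel_trans' {n : ℕ} {P : Equiv.Perm (Fin n) → ℝ} (hP : IsProb P) (hT : StochTrans P)
    {i j k : Fin n} (h1 : rel P i j) (h2 : rel P j k) : rel P i k := by
  have hij : i ≠ j := by rintro rfl; exact rel_irrefl' P i h1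
  have hjk : j ≠ k := by rintro rfl; exact rel_irrefl' P j h2
  have hik : i ≠ k := by rintro rfl; exact rel_asymm' hP h1 h2
  have ha := pp_add' hP hij
  have hb := pp_add' hP hjk
  have hc := pp_add' hP hik
  have h1' : 1/2 ≤ pp P i j := by rcases h1 with h | ⟨h, _⟩ <;> linarith
  have h2' : 1/2 ≤ pp P j k := by rcases h2 with h | ⟨h, _⟩ <;> linarith
  have h3' : 1/2 ≤ pp P i k := hT i j k h1' h2'
  rcases eq_or_lt_of_le h3' with heq | hlt
  · have hki : 1/2 ≤ pp P k i := by linarith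
    have hkj : 1/2 ≤ pp P k j := hT k i j hki h1'
    have hjlt : j < k := by
      rcases h2 with h | ⟨_, h⟩
      · exfalso; linarith
      · exact h
    have hji : 1/2 ≤ pp P j i := hT j k i h2' hki
    have hilt : i < j := by
      rcases h1 with h | ⟨_, h⟩
      · exfalso; linarith
      · exact h
    exact Or.inr ⟨heq.symm, hilt.trans hjlt⟩
  · exact Or.inl hlt

open scoped Classical in
noncomputable def cnt {n : ℕ} (P : Equiv.Perm (Fin n) → ℝ) (i : Fin n) : ℕ :=
  (Finset.univ.filter fun j => rel P j i).card

lemma cnt_lt' {n : ℕ} (P : Equiv.Perm (Fin n) → ℝ) (i : Fin n) : cnt P i < n := by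
  classical
  have hsub : (Finset.univ.filter fun j => rel P j i) ⊆ Finset.univ.erase i := by
    intro j hj
    rcases Finset.mem_filter.1 hj with ⟨-, hj'⟩
    refine Finset.mem_erase.2 ⟨?_, Finset.mem_univ j⟩
    rintro rfl
    exact rel_irrefl' P j hj'
  calc cnt P i ≤ (Finset.univ.erase i).card := by
        rw [cnt]; exact Finset.card_le_card (by convert hsub using 2)
    _ < Finset.univ.card := Finset.card_erase_lt_of_mem (Finset.mem_univ i)
    _ = n := by simp

lemma cnt_mono' {n : ℕ} {P : Equiv.Perm (Fin n) → ℝ} (hP : IsProb P) (hT : StochTrans P)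
    {i j : Fin n} (h : rel P i j) : cnt P i < cnt P j := by
  classical
  have : (Finset.univ.filter fun k => rel P k i) ⊂ (Finset.univ.filter fun k => rel P k j) := by
    constructor
    · intro k hk
      rcases Finset.mem_filter.1 hk with ⟨-, hk'⟩
      exact Finset.mem_filter.2 ⟨Finset.mem_univ k, rel_trans' hP hT hk' h⟩
    · intro hsub
      have hi : i ∈ Finset.univ.filter fun k => rel P k j :=
        Finset.mem_filter.2 ⟨Finset.mem_univ i, h⟩
      have := Finset.mem_filter.1 (hsub hi)
      exact rel_irrefl' P i this.2
  have := Finset.card_lt_card this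
  rw [cnt, cnt]
  convert this using 2

theorem stmt_3 {n : ℕ} (P : Equiv.Perm (Fin n) → ℝ)
    (hP : IsProb P) (hT : StochTrans P) :
    Lstar P = ∑ p ∈ pairs n, min (pp P p.1 p.2) (1 - pp P p.1 p.2) ∧
      Lstar P = ∑ p ∈ pairs n, (1/2 - |pp P p.1 p.2 - 1/2|) := by
  classical
  have key : Lstar P = ∑ p ∈ pairs n, min (pp P p.1 p.2) (1 - pp P p.1 p.2) := by
    have hlow : ∀ σ : Equiv.Perm (Fin n),
        (∑ p ∈ pairs n, min (pp P p.1 p.2) (1 - pp P p.1 p.2)) ≤ L P σ := by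
      intro σ
      rw [L_eq' hP]
      apply Finset.sum_le_sum
      intro p _
      split_ifs
      · exact min_le_right _ _
      · exact min_le_left _ _
    -- construct the median permutation
    have hf : ∀ i : Fin n, cnt P i < n := cnt_lt' P
    set f : Fin n → Fin n := fun i => ⟨cnt P i, hf i⟩ with hfdef
    have hmono : ∀ i j, rel P i j → f i < f j := by
      intro i j h
      exact cnt_mono' hP hT h
    have hinj : Function.Injective f := by
      intro i j hfe
      by_contra hne
      rcases rel_total' hP hne with h | h
      · exact absurd hfe (hmono i j h).ne
      · exact absurd hfe.symm (hmono j i h).ne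
    let σs : Equiv.Perm (Fin n) := Equiv.ofBijective f (Finite.injective_iff_bijective.1 hinj)
    have hσs : ∀ i, σs i = f i := fun i => rfl
    have hup : L P σs = ∑ p ∈ pairs n, min (pp P p.1 p.2) (1 - pp P p.1 p.2) := by
      rw [L_eq' hP]
      refine Finset.sum_congr rfl fun p hp => ?_
      obtain ⟨i, j⟩ := p
      have hij : i < j := by simpa [pairs] using hp
      have hsum := pp_add' hP hij.ne
      rcases rel_total' hP hij.ne with h | h
      · have hs : σs i < σs j := by rw [hσs, hσs]; exact hmono i j h
        rw [if_pos hs]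
        rcases h with h | ⟨h, _⟩
        · rw [min_eq_right (by linarith)]
        · rw [h]; norm_num
      · have hs : ¬ σs i < σs j := by
          rw [hσs, hσs]; exact not_lt.2 (hmono j i h).le
        rw [if_neg hs]
        rcases h with h | ⟨_, h'⟩
        · rw [min_eq_left (by linarith)]
        · exact absurd h' (not_lt.2 hij.le)
    refine le_antisymm ?_ (le_ciInf hlow)
    rw [← hup]
    exact ciInf_le (Finite.bddBelow_range _) σs
  refine ⟨key, ?_⟩
  rw [key]
  refine Finset.sum_congr rfl fun p _ => ?_
  rcases le_total (pp P p.1 p.2) (1/2) with h | h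
  · rw [min_eq_left (by linarith), abs_of_nonpos (by linarith)]; ring
  · rw [min_eq_right (by linarith), abs_of_nonneg (by linarith)]; ring
end

section
/- Let P be a partition of X into measurable cells C_1,...,C_K with μ(C_k) > 0. The minimum of the risk R(s) over piecewise constant ranking rules s(x) = Σ_k σ_k 1{x ∈ C_k} equals Σ_{k=1}^K μ(C_k) L*_{P_{C_k}}, where P_C denotes the conditional law of Σ given X ∈ C, and the minimizers are exactly the rules whose value σ_k on C_k is a Kemeny median of P_{C_k} for each k. -/
open Finset

open MeasureTheory

instance {n : ℕ} : MeasurableSpace (Equiv.Perm (Fin n)) := ⊤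

/-- Risk of a ranking rule s: R(s) = E_{X∼μ}[L_{P_X}(s(X))]. -/
noncomputable def Risk {n : ℕ} {X : Type*} [MeasurableSpace X] (μ : Measure X)
    (P : X → Equiv.Perm (Fin n) → ℝ) (s : X → Equiv.Perm (Fin n)) : ℝ :=
  ∫ x, L (P x) (s x) ∂μ

/-- Minimum risk over all measurable ranking rules. -/
noncomputable def RiskStar {n : ℕ} {X : Type*} [MeasurableSpace X] (μ : Measure X)
    (P : X → Equiv.Perm (Fin n) → ℝ) : ℝ :=
  sInf {r | ∃ s : X → Equiv.Perm (Fin n), Measurable s ∧ r = Risk μ P s}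

/-- Conditional law of Σ given X ∈ C. -/
noncomputable def condP {n : ℕ} {X : Type*} [MeasurableSpace X] (μ : Measure X)
    (P : X → Equiv.Perm (Fin n) → ℝ) (C : Set X) (τ : Equiv.Perm (Fin n)) : ℝ :=
  (∫ x in C, P x τ ∂μ) / (μ C).toReal


section Aux
open MeasureTheory

variable {n : ℕ}

lemma dtau_nonneg (τ σ : Equiv.Perm (Fin n)) : 0 ≤ dtau τ σ :=
  Finset.sum_nonneg fun p _ => by positivity

lemma dtau_le (τ σ : Equiv.Perm (Fin n)) : dtau τ σ ≤ (pairs n).card := by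
  calc dtau τ σ ≤ ∑ _p ∈ pairs n, (1:ℝ) :=
        Finset.sum_le_sum fun p _ => by split <;> norm_num
    _ = (pairs n).card := by simp

lemma L_nonneg {P : Equiv.Perm (Fin n) → ℝ} (hP : IsProb P) (σ : Equiv.Perm (Fin n)) :
    0 ≤ L P σ :=
  Finset.sum_nonneg fun τ _ => mul_nonneg (hP.1 τ) (dtau_nonneg τ σ)

lemma L_le {P : Equiv.Perm (Fin n) → ℝ} (hP : IsProb P) (σ : Equiv.Perm (Fin n)) :
    L P σ ≤ (pairs n).card := by
  calc L P σ ≤ ∑ τ : Equiv.Perm (Fin n), P τ * (pairs n).card :=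
        Finset.sum_le_sum fun τ _ => mul_le_mul_of_nonneg_left (dtau_le τ σ) (hP.1 τ)
    _ = (pairs n).card := by rw [← Finset.sum_mul, hP.2, one_mul]

lemma Lstar_le (P : Equiv.Perm (Fin n) → ℝ) (σ : Equiv.Perm (Fin n)) : Lstar P ≤ L P σ :=
  ciInf_le (Set.finite_range _).bddBelow σ

lemma isMedian_iff (P : Equiv.Perm (Fin n) → ℝ) (σ : Equiv.Perm (Fin n)) :
    IsMedian P σ ↔ L P σ = Lstar P := by
  constructor
  · intro h
    exact le_antisymm (le_ciInf h) (Lstar_le P σ)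
  · intro h τ
    rw [h]; exact Lstar_le P τ

variable {X : Type*} [MeasurableSpace X] {μ : Measure X} [IsFiniteMeasure μ]
  {P : X → Equiv.Perm (Fin n) → ℝ}

lemma P_integrable (hP : ∀ x, IsProb (P x)) (hmeas : ∀ τ, Measurable fun x => P x τ)
    (τ : Equiv.Perm (Fin n)) : Integrable (fun x => P x τ) μ := by
  refine Integrable.mono' (integrable_const (1:ℝ)) (hmeas τ).aestronglyMeasurable ?_
  filter_upwards with x
  rw [Real.norm_eq_abs, abs_of_nonneg ((hP x).1 τ)]
  calc P x τ ≤ ∑ τ' : Equiv.Perm (Fin n), P x τ' :=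
        Finset.single_le_sum (fun τ' _ => (hP x).1 τ') (Finset.mem_univ τ)
    _ = 1 := (hP x).2

lemma L_meas (hmeas : ∀ τ, Measurable fun x => P x τ) (σ : Equiv.Perm (Fin n)) :
    Measurable fun x => L (P x) σ := by
  unfold L
  exact Finset.measurable_sum _ fun τ _ => (hmeas τ).mul_const _

lemma L_integrable (hP : ∀ x, IsProb (P x)) (hmeas : ∀ τ, Measurable fun x => P x τ)
    (σ : Equiv.Perm (Fin n)) : Integrable (fun x => L (P x) σ) μ := by
  refine Integrable.mono' (integrable_const ((pairs n).card : ℝ))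
    ((L_meas hmeas σ).aestronglyMeasurable) ?_
  filter_upwards with x
  rw [Real.norm_eq_abs, abs_of_nonneg (L_nonneg (hP x) σ)]
  exact L_le (hP x) σ

lemma condL (hP : ∀ x, IsProb (P x)) (hmeas : ∀ τ, Measurable fun x => P x τ)
    (C : Set X) (hm : (μ C).toReal ≠ 0) (σ : Equiv.Perm (Fin n)) :
    (μ C).toReal * L (condP μ P C) σ = ∫ x in C, L (P x) σ ∂μ := by
  have h1 : ∫ x in C, L (P x) σ ∂μ
      = ∑ τ : Equiv.Perm (Fin n), (∫ x in C, P x τ ∂μ) * dtau τ σ := by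
    unfold L
    rw [integral_finset_sum _ fun τ _ =>
      ((P_integrable hP hmeas τ).integrableOn.mul_const _)]
    refine Finset.sum_congr rfl fun τ _ => ?_
    rw [integral_mul_const]
  rw [h1]
  unfold L condP
  rw [Finset.mul_sum]
  refine Finset.sum_congr rfl fun τ _ => ?_
  field_simp

end Aux

theorem stmt_12 {n : ℕ} {X : Type*} [MeasurableSpace X]
    (μ : Measure X) [IsProbabilityMeasure μ]
    (P : X → Equiv.Perm (Fin n) → ℝ)
    (hP : ∀ x, IsProb (P x)) (hmeas : ∀ τ, Measurable fun x => P x τ)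
    (K : ℕ) (C : Fin K → Set X)
    (hC : ∀ k, MeasurableSet (C k))
    (hdisj : ∀ k l, k ≠ l → Disjoint (C k) (C l))
    (hcover : (⋃ k, C k) = Set.univ)
    (hpos : ∀ k, 0 < (μ (C k)).toReal)
    (σ : Fin K → Equiv.Perm (Fin n)) (s : X → Equiv.Perm (Fin n))
    (hs : ∀ k, ∀ x ∈ C k, s x = σ k) :
    (∑ k, (μ (C k)).toReal * Lstar (condP μ P (C k)) ≤ Risk μ P s) ∧
    (Risk μ P s = ∑ k, (μ (C k)).toReal * Lstar (condP μ P (C k)) ↔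
      ∀ k, IsMedian (condP μ P (C k)) (σ k)) := by
  haveI : Nonempty (Equiv.Perm (Fin n)) := ⟨1⟩
  have hm : ∀ k, (μ (C k)).toReal ≠ 0 := fun k => (hpos k).ne'
  -- Risk decomposition
  have hptw : (fun x => L (P x) (s x))
      = fun x => ∑ k, (C k).indicator (fun y => L (P y) (σ k)) x := by
    funext x
    have hx : ∃ k, x ∈ C k := by
      have : x ∈ ⋃ k, C k := hcover ▸ Set.mem_univ x
      simpa using this
    obtain ⟨k, hk⟩ := hx
    rw [Finset.sum_eq_single_of_mem k (Finset.mem_univ k)]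
    · rw [Set.indicator_of_mem hk, hs k x hk]
    · intro l _ hl
      refine Set.indicator_of_notMem ?_ _
      exact fun hxl => Set.disjoint_left.mp (hdisj l k hl) hxl hk
  have hdecomp : Risk μ P s = ∑ k, ∫ x in C k, L (P x) (σ k) ∂μ := by
    unfold Risk
    rw [hptw, integral_finset_sum _ fun k _ =>
      (L_integrable hP hmeas (σ k)).indicator (hC k)]
    refine Finset.sum_congr rfl fun k _ => ?_
    rw [integral_indicator (hC k)]
  have hterm : ∀ k, ∫ x in C k, L (P x) (σ k) ∂μ
      = (μ (C k)).toReal * L (condP μ P (C k)) (σ k) := fun k =>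
    (condL hP hmeas (C k) (hm k) (σ k)).symm
  have hRisk : Risk μ P s = ∑ k, (μ (C k)).toReal * L (condP μ P (C k)) (σ k) := by
    rw [hdecomp]; exact Finset.sum_congr rfl fun k _ => hterm k
  have hle : ∀ k ∈ Finset.univ, (μ (C k)).toReal * Lstar (condP μ P (C k))
      ≤ (μ (C k)).toReal * L (condP μ P (C k)) (σ k) := fun k _ =>
    mul_le_mul_of_nonneg_left (Lstar_le _ _) (hpos k).le
  constructor
  · rw [hRisk]
    exact Finset.sum_le_sum hle
  · rw [hRisk, eq_comm, Finset.sum_eq_sum_iff_of_le hle]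
    constructor
    · intro h k
      rw [isMedian_iff]
      have := h k (Finset.mem_univ k)
      exact (mul_left_cancel₀ (hm k) this.symm)
    · intro h k _
      rw [(isMedian_iff _ _).mp (h k)]
end
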